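/- In the biased Shamir-type (k,n) construction over F_t with p ≥ 1/t^k, for any set F of k−1 indices, the average conditional min-entropy satisfies R_∞(S | V_F) = R_∞(S) = −log((p t^k + (1−p) t^{k−1} − 1)/(t^k − 1)). -/

import Mathlib

open Finset Real Filter

/-- `P` is a probability mass function on the finite set `α`. -/
def IsPMF {α : Type*} [Fintype α] (P : α → ℝ) : Prop :=
  (∀ x, 0 ≤ P x) ∧ ∑ x, P x = 1

/-- Min-entropy `R_∞(X) = - log max_x P(x)`. -/
noncomputable def minEnt {α : Type*} [Fintype α] [Nonempty α] (P : α → ℝ) : ℝ :=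
  - Real.log (⨆ x, P x)

/-- Rényi entropy of order `a`: `R_a(X) = (1/(1-a)) log Σ_x P(x)^a`. -/
noncomputable def renyiEnt {α : Type*} [Fintype α] (a : ℝ) (P : α → ℝ) : ℝ :=
  (1 / (1 - a)) * Real.log (∑ x, P x ^ a)

/-- Marginal on the first component of a joint distribution. -/
noncomputable def margX {α β : Type*} [Fintype α] [Fintype β] (P : α × β → ℝ) : α → ℝ :=
  fun x => ∑ y, P (x, y)

/-- Marginal on the second component of a joint distribution. -/
noncomputable def margY {α β : Type*} [Fintype α] [Fintype β] (P : α × β → ℝ) : β → ℝ :=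
  fun y => ∑ x, P (x, y)

/-- Average conditional min-entropy
`R_∞(X|Y) = - log Σ_y P_Y(y) max_x P_{X|Y}(x|y)`. -/
noncomputable def condMinEnt {α β : Type*} [Fintype α] [Fintype β] [Nonempty α]
    (P : α × β → ℝ) : ℝ :=
  - Real.log (∑ y, margY P y * ⨆ x, P (x, y) / margY P y)

/-- Arimoto's conditional Rényi entropy of order `a`:
`R_a(X|Y) = (a/(1-a)) log Σ_y P_Y(y) (Σ_x P_{X|Y}(x|y)^a)^(1/a)`. -/
noncomputable def condRenyiEnt {α β : Type*} [Fintype α] [Fintype β]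
    (a : ℝ) (P : α × β → ℝ) : ℝ :=
  (a / (1 - a)) *
    Real.log (∑ y, margY P y * (∑ x, (P (x, y) / margY P y) ^ a) ^ (1 / a))

/-- Shannon entropy `H(X) = - Σ_x P(x) log P(x)`. -/
noncomputable def shannonEnt {α : Type*} [Fintype α] (P : α → ℝ) : ℝ :=
  ∑ x, Real.negMulLog (P x)

/-- Conditional Shannon entropy `H(X|Y) = H(XY) - H(Y)`. -/
noncomputable def condShannonEnt {α β : Type*} [Fintype α] [Fintype β]
    (P : α × β → ℝ) : ℝ :=
  shannonEnt P - shannonEnt (margY P)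

/-- Distribution of the random variable `X : Ω → α` under the pmf `μ` on `Ω`. -/
noncomputable def dist {Ω α : Type*} [Fintype Ω] [DecidableEq α]
    (μ : Ω → ℝ) (X : Ω → α) : α → ℝ :=
  fun x => ∑ ω, if X ω = x then μ ω else 0

/-- The Shamir-type sharing map `φ : F_t^k → F_t^{n+1}` sending
`(s, r_1, …, r_{k-1})` to `(s, v_1, …, v_n)` with
`v_i = s + Σ_{ℓ=1}^{k-1} x_i^ℓ r_ℓ`. -/
def shamirShare (K : Type*) [Field K] (k n : ℕ) (x : Fin n → K)
    (sr : K × (Fin (k - 1) → K)) : K × (Fin n → K) :=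
  (sr.1, fun i => sr.1 + ∑ ℓ : Fin (k - 1), x i ^ ((ℓ : ℕ) + 1) * sr.2 ℓ)

/-- The distribution table `DT_{(k,n)}`, i.e. the image of `shamirShare`. -/
noncomputable def DT (K : Type*) [Field K] [Fintype K] [DecidableEq K]
    (k n : ℕ) (x : Fin n → K) : Finset (K × (Fin n → K)) :=
  Finset.univ.image (shamirShare K k n x)

/-- The biased joint pmf of `(S, V_1, …, V_n)`: probability `p` on the
all-zero tuple, `(1-p)/(t^k - 1)` on every other tuple of `DT_{(k,n)}`, and
`0` outside `DT_{(k,n)}`, where `t = |K|`. -/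
noncomputable def muShamir (K : Type*) [Field K] [Fintype K] [DecidableEq K]
    (k n : ℕ) (x : Fin n → K) (p : ℝ) : K × (Fin n → K) → ℝ :=
  fun sv =>
    if sv = ((0 : K), fun _ => (0 : K)) then p
    else if sv ∈ DT K k n x then
      (1 - p) / ((Fintype.card K : ℝ) ^ k - 1)
    else 0

/-!
Let `t = |K|` and `q = (1 - p)/(t^k - 1)`. The Shamir map is injective, and for `|F| = k - 1`
the map `(s, r) ↦ (s, v_F)` is even a bijection `K × K^{k-1} → K × K^F`: the vector
`(v_j - s)_{j ∈ F}` is `r` multiplied by the invertible matrix `diag(x_F) · Vandermonde(x_F)`.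
So `(S, V_F)` is distributed like the secret and randomness themselves: weight `p` at `(0, 0)`
and `q` everywhere else. The hypothesis `p ≥ 1/t^k` says exactly `q ≤ p`, and then both the
guessing probability `Σ_w max_s P(s, w)` of `S` given `V_F` and `max_s P_S(s)` are
`p + (t^{k-1} - 1) q`.
-/

section Distribution

variable {Ω α : Type*} [Fintype Ω] [DecidableEq α] (μ : Ω → ℝ)

lemma dist_eq_dist_comp_of_injective {Γ : Type*} [Fintype Γ] {φ : Γ → Ω}
    (hφ : Function.Injective φ) (hμ : ∀ ω ∉ Set.range φ, μ ω = 0) (X : Ω → α) :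
    dist μ X = dist (μ ∘ φ) (X ∘ φ) := by
  funext c
  refine (Fintype.sum_of_injective φ hφ _ _ (fun ω hω => ?_) fun _ => rfl).symm
  simp [hμ ω hω]

lemma dist_apply_of_bijective {X : Ω → α} (hX : Function.Bijective X) (ω : Ω) :
    dist μ X (X ω) = μ ω := by
  classical
  simp [_root_.dist, hX.injective.eq_iff]

lemma dist_fst_eq_margX {β : Type*} [Fintype α] [Fintype β] [DecidableEq β] (Y : Ω → α × β) :
    dist μ (fun ω => (Y ω).1) = margX (dist μ Y) := by
  funext a
  simp only [_root_.dist, margX]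
  rw [Finset.sum_comm]
  refine Finset.sum_congr rfl fun ω _ => ?_
  simp [Prod.ext_iff, ite_and]

end Distribution

section ConditionalMinEntropy

variable {α β : Type*} [Fintype α] [Fintype β] [Nonempty α] {P : α × β → ℝ}

lemma margY_mul_iSup_div_margY (hP : ∀ z, 0 ≤ P z) (b : β) :
    margY P b * ⨆ a, P (a, b) / margY P b = ⨆ a, P (a, b) := by
  have hm : 0 ≤ margY P b := Finset.sum_nonneg fun a _ => hP (a, b)
  rcases hm.eq_or_lt with hm | hm
  · have hzero : ∀ a, P (a, b) = 0 := by
      simpa using (Finset.sum_eq_zero_iff_of_nonneg fun a _ => hP (a, b)).mp hm.symm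
    simp [hzero]
  · rw [Real.mul_iSup_of_nonneg hm.le]
    simp_rw [mul_div_cancel₀ _ hm.ne']

lemma condMinEnt_eq_neg_log_sum_iSup (hP : ∀ z, 0 ≤ P z) :
    condMinEnt P = -Real.log (∑ b, ⨆ a, P (a, b)) := by
  simp_rw [condMinEnt, margY_mul_iSup_div_margY hP]

end ConditionalMinEntropy

def biasedDist {α : Type*} [DecidableEq α] (a₀ : α) (p q : ℝ) : α → ℝ :=
  fun a => if a = a₀ then p else q

section BiasedDist

variable {α β : Type*} [Fintype α] [DecidableEq α] [DecidableEq β] {p q : ℝ}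

lemma sum_biasedDist (a₀ : α) : ∑ a, biasedDist a₀ p q a = p + (Fintype.card α - 1) * q := by
  have hsplit : ∀ a, biasedDist a₀ p q a = q + if a = a₀ then p - q else 0 := fun a => by
    unfold biasedDist; split_ifs <;> ring
  simp [hsplit, Finset.sum_add_distrib]
  ring

lemma iSup_biasedDist [Nonempty α] (a₀ : α) (hqp : q ≤ p) : ⨆ a, biasedDist a₀ p q a = p :=
  le_antisymm (ciSup_le fun a => by unfold biasedDist; split_ifs <;> simp [hqp])
    (le_ciSup_of_le (Set.finite_range _).bddAbove a₀ (by simp [biasedDist]))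

lemma biasedDist_comp_of_bijective [Fintype β] {e : α → β} (he : Function.Bijective e) (a₀ : α) :
    dist (biasedDist a₀ p q) e = biasedDist (e a₀) p q := by
  funext b
  obtain ⟨a, rfl⟩ := he.surjective b
  simp [dist_apply_of_bijective _ he, biasedDist, he.injective.eq_iff]

lemma margX_biasedDist [Fintype β] (a₀ : α) (b₀ : β) :
    margX (biasedDist (a₀, b₀) p q) =
      biasedDist a₀ (p + (Fintype.card β - 1) * q) (Fintype.card β * q) := by
  funext a
  by_cases ha : a = a₀
  · simp [margX, ha, ← sum_biasedDist b₀, biasedDist]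
  · simp [margX, ha, biasedDist]

lemma iSup_biasedDist_prod [Nonempty α] (a₀ : α) (b₀ : β) (hqp : q ≤ p) (b : β) :
    ⨆ a, biasedDist (a₀, b₀) p q (a, b) = biasedDist b₀ p q b := by
  by_cases hb : b = b₀
  · simpa [biasedDist, hb] using iSup_biasedDist a₀ hqp
  · simp [biasedDist, hb]

lemma minEnt_margX_biasedDist [Fintype β] [Nonempty α] (a₀ : α) (b₀ : β) (hqp : q ≤ p) :
    minEnt (margX (biasedDist (a₀, b₀) p q)) = -Real.log (p + (Fintype.card β - 1) * q) := by
  rw [minEnt, margX_biasedDist, iSup_biasedDist]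
  nlinarith

lemma condMinEnt_biasedDist [Fintype β] [Nonempty α] (a₀ : α) (b₀ : β) (hq : 0 ≤ q) (hqp : q ≤ p) :
    condMinEnt (biasedDist (a₀, b₀) p q) = -Real.log (p + (Fintype.card β - 1) * q) := by
  have hnonneg : ∀ z, 0 ≤ biasedDist (a₀, b₀) p q z := fun z => by
    unfold biasedDist; split_ifs <;> linarith
  simp_rw [condMinEnt_eq_neg_log_sum_iSup hnonneg, iSup_biasedDist_prod a₀ b₀ hqp,
    sum_biasedDist]

end BiasedDist

lemma injective_sum_pow_succ_mul {K : Type*} [Field K] {m : ℕ} {y : Fin m → K}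
    (hy : Function.Injective y) (hy0 : ∀ i, y i ≠ 0) :
    Function.Injective fun (r : Fin m → K) (i : Fin m) =>
      ∑ ℓ : Fin m, y i ^ ((ℓ : ℕ) + 1) * r ℓ := by
  have hunit : IsUnit (Matrix.diagonal y * Matrix.vandermonde y) :=
    (Matrix.isUnit_diagonal.mpr (Pi.isUnit_iff.mpr fun i => (hy0 i).isUnit)).mul
      ((Matrix.isUnit_iff_isUnit_det _).mpr (Matrix.det_vandermonde_ne_zero_iff.mpr hy).isUnit)
  convert Matrix.mulVec_injective_iff_isUnit.mpr hunit using 1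
  funext r i
  simp [Matrix.mulVec, dotProduct, Matrix.vandermonde, pow_succ', mul_assoc]

def restrictShares {K : Type*} {n : ℕ} (F : Finset (Fin n)) (sv : K × (Fin n → K)) :
    K × (F → K) :=
  (sv.1, fun j => sv.2 j)

section Shamir

variable {K : Type*} [Field K] [Fintype K] {k n : ℕ} {x : Fin n → K}

lemma restrictShares_comp_shamirShare_bijective (hx : Function.Injective x)
    (hx0 : ∀ i, x i ≠ 0) {F : Finset (Fin n)} (hF : F.card = k - 1) :
    Function.Bijective (restrictShares F ∘ shamirShare K k n x) := by
  rw [Fintype.bijective_iff_injective_and_card]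
  refine ⟨?_, by simp [Fintype.card_prod, hF]⟩
  rintro ⟨s, r⟩ ⟨s', r'⟩ h
  obtain ⟨hs, hv⟩ := Prod.ext_iff.mp h
  simp only [Function.comp, restrictShares, shamirShare] at hs hv
  subst hs
  let e := F.equivFinOfCardEq hF
  have hinj := injective_sum_pow_succ_mul (y := fun i => x (e.symm i))
    (hx.comp (Subtype.val_injective.comp e.symm.injective)) fun i => hx0 _
  congr 1
  exact hinj (funext fun i => by simpa using congrFun hv (e.symm i))

variable [DecidableEq K]

lemma muShamir_comp_shamirShare (hφ : Function.Injective (shamirShare K k n x)) (p : ℝ) :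
    muShamir K k n x p ∘ shamirShare K k n x =
      biasedDist 0 p ((1 - p) / ((Fintype.card K : ℝ) ^ k - 1)) := by
  funext sr
  have hzero : shamirShare K k n x 0 = ((0 : K), fun _ => (0 : K)) := by simp [shamirShare]
  have hmem : shamirShare K k n x sr ∈ DT K k n x := Finset.mem_image_of_mem _ (Finset.mem_univ sr)
  simp only [Function.comp, muShamir, biasedDist, ← hzero, hφ.eq_iff, hmem, if_true]

lemma muShamir_eq_zero_of_notMem_range {p : ℝ} {sv : K × (Fin n → K)}
    (h : sv ∉ Set.range (shamirShare K k n x)) : muShamir K k n x p sv = 0 := by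
  have hDT : sv ∉ DT K k n x := by simpa [DT] using h
  have hne : sv ≠ ((0 : K), fun _ => (0 : K)) := fun h0 => h ⟨0, by simp [h0, shamirShare]⟩
  simp [muShamir, hne, hDT]

lemma dist_muShamir_restrictShares (hx : Function.Injective x) (hx0 : ∀ i, x i ≠ 0)
    {F : Finset (Fin n)} (hF : F.card = k - 1) (p : ℝ) :
    dist (muShamir K k n x p) (restrictShares F) =
      biasedDist ((0 : K), (0 : F → K)) p ((1 - p) / ((Fintype.card K : ℝ) ^ k - 1)) := by
  have hbij := restrictShares_comp_shamirShare_bijective hx hx0 hF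
  rw [dist_eq_dist_comp_of_injective _ hbij.injective.of_comp
      fun _ => muShamir_eq_zero_of_notMem_range, muShamir_comp_shamirShare hbij.injective.of_comp,
    biasedDist_comp_of_bijective hbij]
  congr 1
  simp [restrictShares, shamirShare, Pi.zero_def]

end Shamir

theorem shamir_minEnt_secure_general (K : Type*) [Field K] [Fintype K] [DecidableEq K]
    (k n : ℕ) (hk : 1 ≤ k)
    (x : Fin n → K) (hx : Function.Injective x) (hx0 : ∀ i, x i ≠ 0)
    (p : ℝ) (hp : 1 / (Fintype.card K : ℝ) ^ k ≤ p) (hp1 : p ≤ 1)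
    (F : Finset (Fin n)) (hF : F.card = k - 1) :
    condMinEnt (dist (muShamir K k n x p)
        (fun sv => (sv.1, fun j : F => sv.2 j.1))) =
      minEnt (dist (muShamir K k n x p) Prod.fst) ∧
    minEnt (dist (muShamir K k n x p) Prod.fst) =
      - Real.log
        ((p * (Fintype.card K : ℝ) ^ k + (1 - p) * (Fintype.card K : ℝ) ^ (k - 1) - 1) /
          ((Fintype.card K : ℝ) ^ k - 1)) := by
  set t := (Fintype.card K : ℝ)
  have htk : 1 < t ^ k := one_lt_pow₀ (Nat.one_lt_cast.mpr Fintype.one_lt_card) (by omega)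
  set q := (1 - p) / (t ^ k - 1)
  have hq : 0 ≤ q := div_nonneg (by linarith) (by linarith)
  have hqp : q ≤ p := by
    rw [div_le_iff₀ (by positivity)] at hp
    rw [div_le_iff₀ (by linarith)]
    linarith
  have hjoint : dist (muShamir K k n x p) (restrictShares F) = biasedDist (0, 0) p q :=
    dist_muShamir_restrictShares hx hx0 hF p
  have hS : dist (muShamir K k n x p) Prod.fst = margX (biasedDist ((0 : K), (0 : F → K)) p q) :=
    hjoint ▸ dist_fst_eq_margX _ (restrictShares F)
  have hcard : (Fintype.card (F → K) : ℝ) = t ^ (k - 1) := by simp [hF, t]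
  rw [hS, minEnt_margX_biasedDist _ _ hqp, hcard]
  refine ⟨?_, ?_⟩
  · change condMinEnt (dist _ (restrictShares F)) = _
    rw [hjoint, condMinEnt_biasedDist _ _ hq hqp, hcard]
  · congr 2
    have hden : t ^ k - 1 ≠ 0 := by linarith
    simp only [q]
    field_simp
    ring

/-- in the biased Shamir-type `(k,n)` construction with
`p ≥ 1/t^k`, for any set `F` of `k-1` indices,
`R_∞(S|V_F) = R_∞(S) = -log((p t^k + (1-p) t^{k-1} - 1)/(t^k - 1))`. -/
theorem shamir_minEnt_secure (K : Type*) [Field K] [Fintype K] [DecidableEq K]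
    (k n : ℕ) (hk : 1 ≤ k) (hkn : k ≤ n) (hn : n < Fintype.card K)
    (x : Fin n → K) (hx : Function.Injective x) (hx0 : ∀ i, x i ≠ 0)
    (p : ℝ) (hp : 1 / (Fintype.card K : ℝ) ^ k ≤ p) (hp1 : p ≤ 1)
    (F : Finset (Fin n)) (hF : F.card = k - 1) :
    condMinEnt (dist (muShamir K k n x p)
        (fun sv => (sv.1, fun j : F => sv.2 j.1))) =
      minEnt (dist (muShamir K k n x p) Prod.fst) ∧
    minEnt (dist (muShamir K k n x p) Prod.fst) =
      - Real.log
        ((p * (Fintype.card K : ℝ) ^ k + (1 - p) * (Fintype.card K : ℝ) ^ (k - 1) - 1) /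
          ((Fintype.card K : ℝ) ^ k - 1)) :=
  shamir_minEnt_secure_general K k n hk x hx hx0 p hp hp1 F hF
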